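/- arXiv:2603.00305 — 6 statements merged into one kernel-verified Lean document; each statement's English description precedes it below -/
import Mathlib

section
/- For any directed set P, the cofinality of the character χ(P) belongs to the Tukey spectrum Sp_T(P), i.e., the regular cardinal cf(χ(P)) Tukey-embeds below P. -/
universe u v w

/-- A subset of a preorder is bounded if some element dominates all its members. -/
def DirBounded {P : Type u} [Preorder P] (A : Set P) : Prop :=
  ∃ p : P, ∀ a ∈ A, a ≤ p

/-- A subset of a preorder is unbounded if it is not bounded. -/
def DirUnbounded {P : Type u} [Preorder P] (A : Set P) : Prop :=
  ¬ DirBounded A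

/-- A subset is cofinal if every element is below some member of it. -/
def DirCofinal {P : Type u} [Preorder P] (B : Set P) : Prop :=
  ∀ p : P, ∃ b ∈ B, p ≤ b

/-- `TukeyLE P Q` : `P ≤_T Q`, witnessed by a cofinal map `f : Q → P`
(a map sending every cofinal subset of `Q` to a cofinal subset of `P`). -/
def TukeyLE (P : Type u) (Q : Type v) [Preorder P] [Preorder Q] : Prop :=
  ∃ f : Q → P, ∀ B : Set Q, DirCofinal B → DirCofinal (f '' B)

/-- `UnbddMap P Q` : there is an unbounded map `g : P → Q`, i.e. one sending
every unbounded subset of `P` to an unbounded subset of `Q` (witnessing `P ≤_T Q`). -/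
def UnbddMap (P : Type u) (Q : Type v) [Preorder P] [Preorder Q] : Prop :=
  ∃ g : P → Q, ∀ A : Set P, DirUnbounded A → DirUnbounded (g '' A)

/-- The character `χ(P)`: least cardinality of a cofinal subset of `P`. -/
noncomputable def chi (P : Type u) [Preorder P] : Cardinal.{u} :=
  sInf {c : Cardinal.{u} | ∃ B : Set P, DirCofinal B ∧ Cardinal.mk B = c}

/-- `λ ∈ Sp_T(P)`: `λ` is regular and there is a `λ`-sequence in `P`
every size-`λ` subfamily of which is unbounded in `P` (equivalently `λ ≤_T P`). -/
def InSpT (P : Type u) [Preorder P] (l : Cardinal.{u}) : Prop :=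
  l.IsRegular ∧ ∃ p : l.ord.ToType → P,
    ∀ S : Set l.ord.ToType, Cardinal.mk S = l → DirUnbounded (p '' S)

/-! Let `κ = χ(P)`, which is infinite, and fix a cofinal `B ⊆ P` of size `κ`. Then `B` is the
increasing union of `cf κ` pieces `B_α`, each of size `< κ` and hence not cofinal; pick `p_α`
above no element of `B_α`. If `q` bounded `{p_α : α ∈ S}` with `|S| = cf κ`, take `b ∈ B`
above `q`; as `cf κ` is regular, `S` is unbounded in it, so `b ∈ B_α` for some `α ∈ S`, and
`p_α ≤ q ≤ b` contradicts the choice of `p_α`. -/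

open Cardinal Ordinal Order Set

theorem chi_eq_cof (P : Type u) [Preorder P] : chi P = Order.cof P := by
  refine le_antisymm ?_ (le_csInf ⟨_, univ, IsCofinal.univ, rfl⟩ ?_)
  · obtain ⟨s, hs, hs'⟩ := exists_cof_eq P
    exact csInf_le' ⟨s, hs, hs'⟩
  · rintro _ ⟨B, hB, rfl⟩
    exact cof_le hB

theorem aleph0_le_cof_of_forall_exists_not_le {P : Type u} [Preorder P]
    [IsDirected P (· ≤ ·)] [Nonempty P] (h : ∀ p : P, ∃ q, ¬ q ≤ p) : ℵ₀ ≤ Order.cof P := by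
  by_contra! hlt
  obtain ⟨s, hs, hs'⟩ := exists_cof_eq P
  have hfin : s.Finite := lt_aleph0_iff_set_finite.1 (hs' ▸ hlt)
  obtain ⟨M, hM⟩ := hfin.bddAbove
  obtain ⟨q, hq⟩ := h M
  obtain ⟨b, hb, hqb⟩ := hs q
  exact hq (hqb.trans (hM hb))

namespace Cardinal

theorem mk_lt_of_bddAbove {c : Cardinal.{u}} (hc : ℵ₀ ≤ c) {s : Set c.ord.ToType}
    (hs : BddAbove s) : #s < c := by
  obtain ⟨b, hb⟩ := hs
  refine (mk_le_mk_of_subset hb).trans_lt ?_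
  have := mk_Iic_lt b (by simp) (by simpa using hc)
  rwa [mk_ord_toType] at this

theorem isCofinal_of_mk_eq {c : Cardinal.{u}} (hc : ℵ₀ ≤ c) {s : Set c.ord.ToType}
    (hs : #s = c) : IsCofinal s := by
  have := noMaxOrder hc
  by_contra h
  exact (mk_lt_of_bddAbove hc (not_isCofinal_iff_bddAbove.1 h)).ne hs

end Cardinal

theorem Order.exists_bddAbove_preimage_Iic (α : Type u) [LinearOrder α] [WellFoundedLT α] :
    ∃ f : α → (Order.cof α).ord.ToType, ∀ β, BddAbove (f ⁻¹' Iic β) := by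
  obtain ⟨s, hs, hs'⟩ := Ordinal.exists_ord_cof_eq α
  let e : s ≃o (Order.cof α).ord.ToType :=
    .ofRelIsoLT (type_eq.1 (hs'.trans (type_toType _).symm)).some
  choose g hgs hg using hs
  refine ⟨fun x ↦ e ⟨g x, hgs x⟩, fun β ↦ ⟨e.symm β, fun x hx ↦ (hg x).trans ?_⟩⟩
  exact Subtype.coe_le_coe.2 (e.le_symm_apply.2 hx)

theorem Cardinal.exists_mk_preimage_Iic_lt {X : Type u} {c : Cardinal.{u}} (hX : #X = c)
    (hc : ℵ₀ ≤ c) : ∃ f : X → c.ord.cof.ord.ToType, ∀ β, #(f ⁻¹' Iic β) < c := by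
  obtain ⟨e⟩ : Nonempty (X ≃ c.ord.ToType) := Cardinal.eq.1 (by simp [hX])
  have := Order.exists_bddAbove_preimage_Iic c.ord.ToType
  rw [cof_toType] at this
  obtain ⟨f, hf⟩ := this
  refine ⟨f ∘ e, fun β ↦ ?_⟩
  rw [preimage_comp, mk_preimage_equiv]
  exact mk_lt_of_bddAbove hc (hf β)

theorem inSpT_ord_cof_cof {P : Type u} [Preorder P] (hP : ℵ₀ ≤ Order.cof P) :
    InSpT P (Order.cof P).ord.cof := by
  obtain ⟨B, hB, hBcard⟩ := exists_cof_eq P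
  have hreg : (Order.cof P).ord.cof.IsRegular := isRegular_cof (isSuccLimit_ord hP)
  obtain ⟨f, hf⟩ := exists_mk_preimage_Iic_lt hBcard hP
  have hsmall (β) : ∃ p : P, ∀ b : B, f b ≤ β → ¬ p ≤ b := by
    have : ¬ IsCofinal (Subtype.val '' (f ⁻¹' Iic β)) := fun h ↦
      (mk_image_le.trans_lt (hf β)).not_ge (cof_le h)
    simpa [IsCofinal] using this
  choose p hp using hsmall
  refine ⟨hreg, p, fun S hS ⟨q, hq⟩ ↦ ?_⟩
  obtain ⟨b, hb, hqb⟩ := hB q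
  obtain ⟨α, hαS, hα⟩ := isCofinal_of_mk_eq hreg.aleph0_le hS (f ⟨b, hb⟩)
  exact hp α ⟨b, hb⟩ hα ((hq _ (mem_image_of_mem p hαS)).trans hqb)

/-- For a directed set `P` (with no greatest element, so that `χ(P)` is infinite),
`cf(χ(P)) ∈ Sp_T(P)`. -/
theorem stmt2 {P : Type u} [Preorder P] [IsDirected P (· ≤ ·)] [Nonempty P]
    (hnt : ∀ p : P, ∃ q : P, ¬ q ≤ p) :
    InSpT P ((chi P).ord.cof) := by
  rw [chi_eq_cof]
  exact inSpT_ord_cof_cof (aleph0_le_cof_of_forall_exists_not_le hnt)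
end

section
/- Let λ be a cardinal, and suppose (Q_α)_{α<λ} is a family of directed sets with Q_α ≤_T P for each α < λ, where P is a λ⁺-directed set (every subset of P of size ≤ λ has an upper bound). Then the full product ∏_{α<λ} Q_α (with coordinatewise order) is Tukey below P. -/
/-! Pick for each `x` an upper bound `f x` of the family `(gα (x α))_α`, which has size at most
`λ`. If `f` maps `A` into a bounded set, then each `gα` maps the projection `π_α A` into a bounded
set, so every projection of `A` is bounded, and hence so is `A` itself. -/

universe u v w

theorem DirBounded.of_forall_eval {ι : Type w} {Q : ι → Type v} [∀ i, Preorder (Q i)]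
    {A : Set (∀ i, Q i)} (h : ∀ i, DirBounded ((fun a => a i) '' A)) : DirBounded A := by
  choose q hq using h
  exact ⟨q, fun a ha i => hq i _ ⟨a, ha, rfl⟩⟩

theorem UnbddMap.pi {ι : Type w} {P : Type u} [Preorder P] {Q : ι → Type v}
    [∀ i, Preorder (Q i)] (hT : ∀ i, UnbddMap (Q i) P)
    (hbdd : ∀ p : ι → P, DirBounded (Set.range p)) : UnbddMap (∀ i, Q i) P := by
  choose g hg using hT
  choose f hf using fun x : ∀ i, Q i => hbdd fun i => g i (x i)
  refine ⟨f, fun A hA ⟨p, hp⟩ => hA (DirBounded.of_forall_eval fun i => ?_)⟩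
  by_contra hproj
  refine hg i _ hproj ⟨p, ?_⟩
  rintro _ ⟨_, ⟨a, ha, rfl⟩, rfl⟩
  exact (hf a _ (Set.mem_range_self i)).trans (hp _ ⟨a, ha, rfl⟩)

theorem stmt4_general {P : Type u} [Preorder P]
    (l : Cardinal.{u}) (Q : l.ord.ToType → Type u)
    [∀ α, Preorder (Q α)]
    (hT : ∀ α, UnbddMap (Q α) P)
    (hdir : ∀ A : Set P, Cardinal.mk A ≤ l → DirBounded A) :
    UnbddMap (∀ α, Q α) P :=
  UnbddMap.pi hT fun _ => hdir _ (Cardinal.mk_range_le.trans_eq (Cardinal.mk_ord_toType l))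

/-- If each `Q α` (`α < λ`) is Tukey below `P` and `P` is `λ⁺`-directed,
then the full product `∏_{α<λ} Q α` is Tukey below `P`. -/
theorem stmt4 {P : Type u} [Preorder P] [IsDirected P (· ≤ ·)]
    (l : Cardinal.{u}) (Q : l.ord.ToType → Type u)
    [∀ α, Preorder (Q α)] [∀ α, IsDirected (Q α) (· ≤ ·)]
    (hT : ∀ α, UnbddMap (Q α) P)
    (hdir : ∀ A : Set P, Cardinal.mk A ≤ l → DirBounded A) :
    UnbddMap (∀ α, Q α) P :=
  stmt4_general l Q hT hdir
end

section
/- Let P be a directed set, θ < χ(P) a cardinal, and ⟨A_α : α < θ⟩ a sequence of subsets of P each of cardinality less than χ(P) such that ⋃_{α<θ} A_α is cofinal in P. Then sup over α < θ of the least cardinality of a set X_α ⊆ A_α with A_α \ X_α bounded in P equals χ(P). -/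
universe u v w

/-- `J_bd(A,P)` : the subsets of `A` that are bounded in `P`. -/
def Jbd {P : Type u} [Preorder P] (A : Set P) : Set (Set P) :=
  {X | X ⊆ A ∧ DirBounded X}

/-!
Every `δ_α` is at most `#A_α < χ(P)`, so the supremum is at most `χ(P)`. Conversely, choose for
each `α` an optimal `X_α ⊆ A_α` and a bound `p_α` of `A_α \ X_α`. Since `⋃ A_α` is cofinal,
so is `⋃ X_α ∪ {p_α}`, a set of size at most `θ · sup δ_α + θ`. As `χ(P)` is infinite and
`θ < χ(P)`, this forces `sup δ_α ≥ χ(P)`.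
-/

open Cardinal Set

section
variable {P : Type u} [Preorder P]

/-- The paper's `δ_{(J_bd(A,P))*}`. -/
noncomputable def coboundedCard (A : Set P) : Cardinal.{u} :=
  sInf {c | ∃ X : Set P, X ⊆ A ∧ DirBounded (A \ X) ∧ #X = c}

theorem chi_le_mk {B : Set P} (hB : DirCofinal B) : chi P ≤ #B :=
  csInf_le' ⟨B, hB, rfl⟩

theorem exists_dirCofinal_mk_eq_chi (P : Type u) [Preorder P] :
    ∃ B : Set P, DirCofinal B ∧ #B = chi P := by
  have : {c | ∃ B : Set P, DirCofinal B ∧ #B = c}.Nonempty :=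
    ⟨_, univ, fun p => ⟨p, trivial, le_rfl⟩, rfl⟩
  exact csInf_mem this

theorem chi_eq_zero [IsEmpty P] : chi P = 0 :=
  nonpos_iff_eq_zero.1 ((chi_le_mk (B := ∅) isEmptyElim).trans_eq (by simp))

theorem nonempty_of_chi_ne_zero (h : chi P ≠ 0) : Nonempty P :=
  not_isEmpty_iff.1 fun _ => h chi_eq_zero

theorem DirCofinal.nonempty [Nonempty P] {B : Set P} (hB : DirCofinal B) : B.Nonempty :=
  let ⟨b, hb, _⟩ := hB (Classical.arbitrary P)
  ⟨b, hb⟩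

theorem aleph0_le_chi_of_one_lt [IsDirected P (· ≤ ·)] (h : 1 < chi P) : ℵ₀ ≤ chi P := by
  by_contra! hfin
  have := nonempty_of_chi_ne_zero (one_pos.trans h).ne'
  obtain ⟨B, hB, hBchi⟩ := exists_dirCofinal_mk_eq_chi P
  obtain ⟨M, hM⟩ := (lt_aleph0_iff_set_finite.1 (hBchi ▸ hfin)).bddAbove
  obtain ⟨b, -, hMb⟩ := hB M
  have hb : DirCofinal ({b} : Set P) := fun q =>
    let ⟨_, hb', hqb'⟩ := hB q
    ⟨b, rfl, hqb'.trans ((hM hb').trans hMb)⟩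
  exact h.not_ge ((chi_le_mk hb).trans_eq (mk_singleton b))

theorem dirBounded_empty [Nonempty P] : DirBounded (∅ : Set P) :=
  ⟨Classical.arbitrary P, by simp⟩

theorem exists_coboundedCard [Nonempty P] (A : Set P) :
    ∃ X ⊆ A, DirBounded (A \ X) ∧ #X = coboundedCard A := by
  have : {c | ∃ X : Set P, X ⊆ A ∧ DirBounded (A \ X) ∧ #X = c}.Nonempty :=
    ⟨_, A, subset_rfl, sdiff_self (a := A) ▸ dirBounded_empty, rfl⟩
  exact csInf_mem this

theorem coboundedCard_le_mk [Nonempty P] (A : Set P) : coboundedCard A ≤ #A :=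
  csInf_le' ⟨A, subset_rfl, sdiff_self (a := A) ▸ dirBounded_empty, rfl⟩

theorem DirCofinal.iUnion_union_range {ι : Sort*} {A X : ι → Set P} {p : ι → P}
    (hcof : DirCofinal (⋃ i, A i)) (hp : ∀ i, ∀ a ∈ A i \ X i, a ≤ p i) :
    DirCofinal ((⋃ i, X i) ∪ range p) := by
  intro q
  obtain ⟨a, ha, hqa⟩ := hcof q
  obtain ⟨i, hai⟩ := mem_iUnion.1 ha
  by_cases hx : a ∈ X i
  · exact ⟨a, .inl (mem_iUnion_of_mem i hx), hqa⟩
  · exact ⟨p i, .inr ⟨i, rfl⟩, hqa.trans (hp i a ⟨hai, hx⟩)⟩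

end

theorem mk_iUnion_union_range_lt {α ι : Type u} {X : ι → Set α} {p : ι → α} {κ : Cardinal.{u}}
    (hκ : ℵ₀ ≤ κ) (hι : #ι < κ) (hX : ⨆ i, #(X i) < κ) :
    #↥((⋃ i, X i) ∪ range p) < κ :=
  calc #↥((⋃ i, X i) ∪ range p) ≤ #(⋃ i, X i) + #(range p) := mk_union_le _ _
    _ ≤ #ι * (⨆ i, #(X i)) + #ι := add_le_add (mk_iUnion_le X) mk_range_le
    _ < κ := add_lt_of_lt hκ (mul_lt_of_lt hκ hι hX) hι

/-- If `θ < χ(P)` and `⟨A_α : α < θ⟩` are subsets of `P` of size `< χ(P)` with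
`⋃ A_α` cofinal, then `sup_α δ_{(J_bd(A_α,P))*} = χ(P)`, where
`δ_{(J_bd(A_α,P))*}` is the least size of `X ⊆ A_α` with `A_α \ X` bounded. -/
theorem stmt11 {P : Type u} [Preorder P] [IsDirected P (· ≤ ·)]
    (θ : Cardinal.{u}) (hθ : θ < chi P)
    (A : θ.ord.ToType → Set P) (hA : ∀ α, Cardinal.mk (A α) < chi P)
    (hcof : DirCofinal (⋃ α, A α)) :
    (⨆ α, sInf {c : Cardinal.{u} |
        ∃ X : Set P, X ⊆ A α ∧ DirBounded (A α \ X) ∧ Cardinal.mk X = c}) = chi P := by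
  have := nonempty_of_chi_ne_zero hθ.ne_bot
  have : Nonempty θ.ord.ToType := by
    obtain ⟨a, ha⟩ := hcof.nonempty
    exact (mem_iUnion.1 ha).nonempty
  have hθ0 : θ ≠ 0 := by simpa using Ordinal.nonempty_toType_iff.1 ‹Nonempty θ.ord.ToType›
  have hchi : ℵ₀ ≤ chi P :=
    aleph0_le_chi_of_one_lt ((Cardinal.one_le_iff_ne_zero.2 hθ0).trans_lt hθ)
  change ⨆ α, coboundedCard (A α) = chi P
  refine le_antisymm (ciSup_le fun α => ((coboundedCard_le_mk _).trans_lt (hA α)).le) ?_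
  by_contra! hlt
  choose X _ hbdd hX using fun α => exists_coboundedCard (A α)
  choose p hp using hbdd
  refine (chi_le_mk (hcof.iUnion_union_range hp)).not_gt (mk_iUnion_union_range_lt hchi ?_ ?_)
  · rwa [mk_ord_toType]
  · simpa only [hX] using hlt
end

section
/- Let P be a directed set, B a set of regular cardinals with |B| regular, and I an ideal on B such that P is not I-cohesive. Suppose ∏B/I has true cofinality μ, witnessed by a <_I-increasing cofinal (dominating) sequence ⟨f_β : β < μ⟩, and for each b ∈ B fix a sequence ⟨p^b_α : α < b⟩ witnessing b ∈ Sp_T(P). Then μ ∈ Sp_T(P). -/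
/-!
For each `β < μ`, failure of cohesiveness bounds the family `⟨p^b_{f_β(b)} : b ∈ B⟩` by some
`q_β` on an `I`-positive set `X_β`; `⟨q_β : β < μ⟩` is the required sequence. Suppose `q` bounds
`q_β` for `μ` many `β`. For each `b`, fewer than `b` indices `α < b` satisfy `p^b_α ≤ q`, so by
regularity of `b` they all lie below some `g(b) < b`. Cofinality of the scale gives such a `β`
with `g <_I f_β`, hence `g(b) < f_β(b)` for some `b ∈ X_β`; yet `p^b_{f_β(b)} ≤ q_β ≤ q`
forces `f_β(b) < g(b)`.
-/

universe u v w

/-- `∏ B`. -/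
def prodSet (B : Set Cardinal.{u}) : Type (u + 1) :=
  {f : B → Ordinal.{u} // ∀ b : B, f b < (b : Cardinal.{u}).ord}

def Cohesive (P : Type u) [Preorder P] {S : Type v} (I : Set (Set S)) : Prop :=
  ∃ p : S → P, ∀ T : Set S, T ∉ I → DirUnbounded (p '' T)

/-- `f <_I g`. -/
def ltI {B : Set Cardinal.{u}} (I : Set (Set ↥B)) (f g : prodSet B) : Prop :=
  {b : B | ¬ f.1 b < g.1 b} ∈ I

open Cardinal Ordinal Set

lemma exists_notMem_dirBounded_of_not_cohesive {P : Type u} [Preorder P] {S : Type v}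
    {I : Set (Set S)} (hI : ¬ Cohesive P I) (p : S → P) :
    ∃ T ∉ I, DirBounded (p '' T) := by
  by_contra! h
  exact hI ⟨p, h⟩

lemma isCofinal_of_mk_eq {c : Cardinal.{u}} {S : Set c.ord.ToType} (hS : #S = c) :
    IsCofinal S := by
  by_contra h
  obtain ⟨x, hx⟩ := not_isCofinal_iff.mp h
  have : #S < c := calc
    #S ≤ #(Iio x) := mk_le_mk_of_subset hx
    _ < #c.ord.ToType := mk_Iio_lt x (by simp)
    _ = c := mk_ord_toType c
  exact this.ne hS

lemma exists_lt_ord_of_forall_dirUnbounded {P : Type u} [Preorder P] {κ : Cardinal.{u}}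
    (hκ : κ.IsRegular) {p : κ.ord.ToType → P}
    (hp : ∀ S : Set κ.ord.ToType, #S = κ → DirUnbounded (p '' S)) (q : P) :
    ∃ o < κ.ord, ∀ a (ha : a < κ.ord), p (ToType.mk ⟨a, ha⟩) ≤ q → a < o := by
  set A := {x | p x ≤ q}
  have hA : #A < κ := by
    refine ((mk_set_le A).trans_eq (mk_ord_toType κ)).lt_of_ne fun hAκ => hp A hAκ ⟨q, ?_⟩
    rintro _ ⟨x, hx, rfl⟩
    exact hx
  have hA_not_cofinal : ¬ IsCofinal A := fun h =>
    (Order.cof_le h).not_gt (by rwa [cof_toType, hκ.cof_ord])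
  obtain ⟨x, hx⟩ := not_isCofinal_iff.mp hA_not_cofinal
  refine ⟨ToType.mk.symm x, (ToType.mk.symm x).2, fun a ha hpa => ?_⟩
  simpa [← Subtype.coe_lt_coe] using ToType.mk.symm.strictMono (hx (ToType.mk ⟨a, ha⟩) hpa)

section Ideal

variable {B : Set Cardinal.{u}} {I : Set (Set ↥B)}

lemma exists_mem_lt_of_ltI (hdown : ∀ X Y : Set ↥B, X ⊆ Y → Y ∈ I → X ∈ I) {T : Set ↥B}
    (hT : T ∉ I) {f g : prodSet B} (hfg : ltI I f g) :
    ∃ b ∈ T, f.1 b < g.1 b := by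
  by_contra! h
  exact hT (hdown _ _ (fun b hb => not_lt.mpr (h b hb)) hfg)

lemma ltI_trans (hdown : ∀ X Y : Set ↥B, X ⊆ Y → Y ∈ I → X ∈ I)
    (hunion : ∀ X Y : Set ↥B, X ∈ I → Y ∈ I → X ∪ Y ∈ I)
    {f g h : prodSet B} (hfg : ltI I f g) (hgh : ltI I g h) : ltI I f h := by
  refine hdown _ _ (fun b hfh => ?_) (hunion _ _ hfg hgh)
  by_contra hb
  simp only [mem_union, mem_ofPred_eq, not_or, not_not] at hfh hb
  exact hfh (hb.1.trans hb.2)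

lemma exists_mem_ltI_of_mk_eq (hdown : ∀ X Y : Set ↥B, X ⊆ Y → Y ∈ I → X ∈ I)
    (hunion : ∀ X Y : Set ↥B, X ∈ I → Y ∈ I → X ∪ Y ∈ I)
    {μ : Cardinal.{u}} {F : μ.ord.ToType → prodSet B}
    (hFinc : ∀ i j : μ.ord.ToType, i < j → ltI I (F i) (F j))
    (hFcof : ∀ g : prodSet B, ∃ i, ltI I g (F i))
    {S : Set μ.ord.ToType} (hS : #S = μ) (g : prodSet B) :
    ∃ β ∈ S, ltI I g (F β) := by
  obtain ⟨i, hi⟩ := hFcof g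
  obtain ⟨β, hβS, hiβ⟩ := isCofinal_of_mk_eq hS i
  refine ⟨β, hβS, ?_⟩
  rcases hiβ.eq_or_lt with rfl | hiβ
  · exact hi
  · exact ltI_trans hdown hunion hi (hFinc i β hiβ)

end Ideal

theorem stmt15_general {P : Type u} [Preorder P]
    (B : Set Cardinal.{u})
    (hBsp : ∀ b ∈ B, InSpT P b)
    (I : Set (Set ↥B))
    (hdown : ∀ X Y : Set ↥B, X ⊆ Y → Y ∈ I → X ∈ I)
    (hunion : ∀ X Y : Set ↥B, X ∈ I → Y ∈ I → X ∪ Y ∈ I)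
    (hcoh : ¬ Cohesive P I)
    (μ : Cardinal.{u}) (hμreg : μ.IsRegular)
    (F : μ.ord.ToType → prodSet B)
    (hFinc : ∀ i j : μ.ord.ToType, i < j → ltI I (F i) (F j))
    (hFcof : ∀ g : prodSet B, ∃ i, ltI I g (F i)) :
    InSpT P μ := by
  choose p hp using fun b : ↥B => (hBsp b b.2).2
  choose X hXI q hq using fun β => exists_notMem_dirBounded_of_not_cohesive hcoh
    fun b : ↥B => p b (ToType.mk ⟨(F β).1 b, (F β).2 b⟩)
  refine ⟨hμreg, q, fun S hS ⟨r, hr⟩ => ?_⟩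
  choose g hg hgr using fun b : ↥B =>
    exists_lt_ord_of_forall_dirUnbounded (hBsp b b.2).1 (hp b) r
  obtain ⟨β, hβS, hgβ⟩ := exists_mem_ltI_of_mk_eq hdown hunion hFinc hFcof hS ⟨g, hg⟩
  obtain ⟨b, hbX, hlt⟩ := exists_mem_lt_of_ltI hdown (hXI β) hgβ
  have hbelow : p b (ToType.mk ⟨(F β).1 b, (F β).2 b⟩) ≤ r :=
    (hq β _ ⟨b, hbX, rfl⟩).trans (hr _ ⟨β, hβS, rfl⟩)
  exact (hgr b _ _ hbelow).asymm hlt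

/-- Stepping up with an ideal: if `B ⊆ Sp_T(P)` consists of regular cardinals,
`|B|` is regular, `I` is an ideal on `B` such that `P` is not `I`-cohesive, and
`tcf(∏ B / I) = μ` is witnessed by a `<_I`-increasing dominating scale of length
`μ`, then `μ ∈ Sp_T(P)`. -/
theorem stmt15 {P : Type u} [Preorder P] [IsDirected P (· ≤ ·)]
    (B : Set Cardinal.{u}) (hBreg : ∀ b ∈ B, Cardinal.IsRegular b)
    (hBsp : ∀ b ∈ B, InSpT P b)
    (hBcard : (Cardinal.mk B).IsRegular)
    (I : Set (Set ↥B))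
    (hdown : ∀ X Y : Set ↥B, X ⊆ Y → Y ∈ I → X ∈ I)
    (hunion : ∀ X Y : Set ↥B, X ∈ I → Y ∈ I → X ∪ Y ∈ I)
    (hcoh : ¬ Cohesive P I)
    (μ : Cardinal.{u}) (hμreg : μ.IsRegular)
    (F : μ.ord.ToType → prodSet B)
    (hFinc : ∀ i j : μ.ord.ToType, i < j → ltI I (F i) (F j))
    (hFcof : ∀ g : prodSet B, ∃ i, ltI I g (F i)) :
    InSpT P μ :=
  stmt15_general B hBsp I hdown hunion hcoh μ hμreg F hFinc hFcof
end

section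
/- Let U be an ultrafilter on a set X and λ a regular cardinal, and I an ideal on λ. Then U (ordered by reverse inclusion) is I-cohesive if and only if in the ultrapower M_U = V^X/U there is a set Y covering j_U''λ (i.e., j_U(i) ∈ Y for all i < λ) such that for every I-positive set S ⊆ λ, M_U ⊨ j_U(S) ⊄ Y. -/
universe u v w

open Set

theorem Filter.exists_mem_forall_subset_iff_biInter_mem {X ι : Type*} (F : Filter X)
    (A : ι → Set X) (S : Set ι) :
    (∃ C ∈ F, ∀ i ∈ S, C ⊆ A i) ↔ ⋂ i ∈ S, A i ∈ F :=
  ⟨fun ⟨_, hC, hCA⟩ => F.mem_of_superset hC (subset_iInter₂ hCA),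
    fun h => ⟨_, h, fun _ hi => biInter_subset_of_mem hi⟩⟩

theorem setOf_subset_eq_biInter {X ι : Type*} (f : X → Set ι) (S : Set ι) :
    {x | S ⊆ f x} = ⋂ i ∈ S, {x | i ∈ f x} := by
  ext x
  simp only [mem_ofPred_eq, mem_iInter]
  rfl

theorem stmt16_general {X : Type u} (U : Ultrafilter X) (l : Cardinal.{u})
    (I : Set (Set l.ord.ToType)) :
    (∃ A : l.ord.ToType → Set X, (∀ i, A i ∈ U) ∧
        ∀ S : Set l.ord.ToType, S ∉ I → ¬ ∃ C ∈ U, ∀ i ∈ S, C ⊆ A i) ↔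
    (∃ f : X → Set l.ord.ToType, (∀ i, {x | i ∈ f x} ∈ U) ∧
        ∀ S : Set l.ord.ToType, S ∉ I → {x | S ⊆ f x} ∉ U) := by
  constructor
  · rintro ⟨A, hA, hS⟩
    refine ⟨fun x => {i | x ∈ A i}, hA, fun S hSI hmem => hS S hSI ?_⟩
    rw [setOf_subset_eq_biInter] at hmem
    exact ((U : Filter X).exists_mem_forall_subset_iff_biInter_mem A S).2 hmem
  · rintro ⟨f, hf, hS⟩
    refine ⟨fun i => {x | i ∈ f x}, hf, fun S hSI hbdd => hS S hSI ?_⟩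
    rw [setOf_subset_eq_biInter]
    exact ((U : Filter X).exists_mem_forall_subset_iff_biInter_mem _ S).1 hbdd

/-- Ultrapower characterization of `I`-cohesiveness of an ultrafilter `U` (as a
directed set under `⊇`). The right-hand side renders, via Łoś's theorem, the
existence of `Y = [f]_U ∈ M_U` covering `j_U''λ` (`j_U(i) ∈ Y` iff
`{x : i ∈ f x} ∈ U`) such that `j_U(S) ⊄ Y` (`{x : S ⊆ f x} ∉ U`) for every
`I`-positive `S ⊆ λ`. Unboundedness in `(U,⊇)` of `{A_i : i ∈ S}` means it has
no lower bound in `U`. -/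
theorem stmt16 {X : Type u} (U : Ultrafilter X) (l : Cardinal.{u})
    (hl : l.IsRegular) (I : Set (Set l.ord.ToType)) :
    (∃ A : l.ord.ToType → Set X, (∀ i, A i ∈ U) ∧
        ∀ S : Set l.ord.ToType, S ∉ I → ¬ ∃ C ∈ U, ∀ i ∈ S, C ⊆ A i) ↔
    (∃ f : X → Set l.ord.ToType, (∀ i, {x | i ∈ f x} ∈ U) ∧
        ∀ S : Set l.ord.ToType, S ∉ I → {x | S ⊆ f x} ∉ U) :=
  stmt16_general U l I
end

section
/- Let P, Q be directed sets with P not Tukey below Q, and for each p ∈ P let R^p be a directed set with R^p ≤_T Q witnessed by an unbounded map π^p : R^p → Q, where moreover no R^p has a maximal element. Define F on ∏_{p∈P} R^p by choosing for each a⃗ an unbounded (in P) set I_{a⃗} ⊆ P on which p ↦ π^p(a⃗(p)) is bounded by F(a⃗) ∈ Q. Then F maps every ≤_{J_bd(P)}-cofinal subset of ∏_{p∈P} R^p onto an unbounded subset of Q. -/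
universe u v w

/-!
Suppose `q` bounds `F '' Xs`. Since each `π p` is unbounded, the elements of `R p` that `π p`
sends below `q` are bounded by some `s p`; pick `t p > s p`. Some `b ∈ Xs` dominates `t` off a
bounded set of coordinates, and the unbounded set `Ia b` contains a coordinate `p` outside it.
There `t p ≤ b p`, while `π p (b p) ≤ F b ≤ q` forces `b p ≤ s p < t p`.
-/

theorem DirUnbounded.exists_mem_not_mem {P : Type u} [Preorder P] {A B : Set P}
    (hA : DirUnbounded A) (hB : DirBounded B) : ∃ a ∈ A, a ∉ B := by
  by_contra! h
  obtain ⟨p, hp⟩ := hB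
  exact hA ⟨p, fun a ha => hp a (h a ha)⟩

theorem dirBounded_preimage_Iic {α : Type u} {β : Type v} [Preorder α] [Preorder β] {g : α → β}
    (hg : ∀ A : Set α, DirUnbounded A → DirUnbounded (g '' A)) (q : β) :
    DirBounded (g ⁻¹' Set.Iic q) := by
  by_contra h
  exact hg _ h ⟨q, by rintro _ ⟨r, hr, rfl⟩; exact hr⟩

theorem stmt17_general {P : Type u} {Q : Type v} [Preorder P] [Preorder Q]
    (R : P → Type w) [∀ p, Preorder (R p)]
    (hnomax : ∀ p, ∀ r : R p, ∃ r' : R p, r < r')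
    (π : ∀ p, R p → Q)
    (hπ : ∀ p, ∀ A : Set (R p), DirUnbounded A → DirUnbounded (π p '' A))
    (F : (∀ p, R p) → Q) (Ia : (∀ p, R p) → Set P)
    (hIa : ∀ a, DirUnbounded (Ia a))
    (hFa : ∀ a, ∀ p ∈ Ia a, π p (a p) ≤ F a)
    (Xs : Set (∀ p, R p))
    (hX : ∀ a : ∀ p, R p, ∃ b ∈ Xs, DirBounded {p : P | ¬ a p ≤ b p}) :
    DirUnbounded (F '' Xs) := by
  rintro ⟨q, hq⟩
  choose s hs using fun p => dirBounded_preimage_Iic (hπ p) q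
  choose t hst using fun p => hnomax p (s p)
  obtain ⟨b, hbX, hbad⟩ := hX t
  obtain ⟨p, hpI, htb⟩ := (hIa b).exists_mem_not_mem hbad
  have hbs : b p ≤ s p := hs p (b p) ((hFa b p hpI).trans (hq _ ⟨b, hbX, rfl⟩))
  exact (hst p).not_ge ((not_not.mp htb).trans hbs)

/-- If `P ≰_T Q`, each `R p ≤_T Q` via an unbounded map `π p`, no `R p` has a
maximal element, and `F` assigns to each `a⃗ ∈ ∏_p R p` a bound in `Q` of
`p ↦ π p (a⃗ p)` on an unbounded set `Ia a⃗ ⊆ P`, then `F` maps every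
`≤_{J_bd(P)}`-cofinal subset of the product to an unbounded subset of `Q`. -/
theorem stmt17 {P : Type u} {Q : Type v} [Preorder P] [Preorder Q]
    [IsDirected P (· ≤ ·)] [IsDirected Q (· ≤ ·)]
    (R : P → Type w) [∀ p, Preorder (R p)] [∀ p, IsDirected (R p) (· ≤ ·)]
    (hnomax : ∀ p, ∀ r : R p, ∃ r' : R p, r < r')
    (hPQ : ¬ UnbddMap P Q)
    (π : ∀ p, R p → Q)
    (hπ : ∀ p, ∀ A : Set (R p), DirUnbounded A → DirUnbounded (π p '' A))
    (F : (∀ p, R p) → Q) (Ia : (∀ p, R p) → Set P)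
    (hIa : ∀ a, DirUnbounded (Ia a))
    (hFa : ∀ a, ∀ p ∈ Ia a, π p (a p) ≤ F a)
    (Xs : Set (∀ p, R p))
    (hX : ∀ a : ∀ p, R p, ∃ b ∈ Xs, DirBounded {p : P | ¬ a p ≤ b p}) :
    DirUnbounded (F '' Xs) :=
  stmt17_general R hnomax π hπ F Ia hIa hFa Xs hX
end
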